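/- (Action of the Pauli searching oracle.) Fix x ∈ {0,1}^n. Define the maps on (1+n)-qubit matrices: C_I[ρ] = 2^{-n} Σ_{α} D_α ρ D_α† with D_α = diag(Q_α, −Q_α), and C_x[ρ] = 2^{-n} Σ_{i,j} E_{ij} ρ E_{ij}† with E_{ij} = diag(|i⟩⟨j|, |i⊕x⟩⟨j⊕x|), and set C_search = (2/3) C_x + (1/3) C_I. Then for every bitstring α ∈ {0,1}^n: C_search[X ⊗ Q_x] = (1/3)(X ⊗ Q_x), and C_search[X ⊗ Q_α] = −(1/3)(X ⊗ Q_α) for α ≠ x. Moreover C_I[X⊗Q_α] = −X⊗Q_α for all α, while C_x[X⊗Q_x] = X⊗Q_x and C_x[X⊗Q_α] = 0 for α ≠ x. -/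

import Mathlib

open Matrix BigOperators

/-- Bitstrings of length `n`. -/
abbrev BV (n : ℕ) : Type := Fin n → ZMod 2

/-- The Pauli X-string `Q_α`: `(Q_α)_{ij} = 1` iff `j = i ⊕ α`. -/
def Qx {n : ℕ} (α : BV n) : Matrix (BV n) (BV n) ℂ :=
  Matrix.of fun i j => if j = i + α then 1 else 0

/-- The channel `C_I[ρ] = 2^{-n} ∑_α diag(Q_α, −Q_α) ρ diag(Q_α, −Q_α)†`. -/
noncomputable def CI {n : ℕ} (ρ : Matrix (BV n ⊕ BV n) (BV n ⊕ BV n) ℂ) :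
    Matrix (BV n ⊕ BV n) (BV n ⊕ BV n) ℂ :=
  ((2 : ℂ) ^ n)⁻¹ •
    ∑ α : BV n,
      Matrix.fromBlocks (Qx α) 0 0 (-Qx α) * ρ *
        (Matrix.fromBlocks (Qx α) 0 0 (-Qx α))ᴴ

/-- The channel `C_x[ρ] = 2^{-n} ∑_{i,j} diag(|i⟩⟨j|, |i⊕x⟩⟨j⊕x|) ρ diag(...)†`. -/
noncomputable def Cx {n : ℕ} (x : BV n)
    (ρ : Matrix (BV n ⊕ BV n) (BV n ⊕ BV n) ℂ) :
    Matrix (BV n ⊕ BV n) (BV n ⊕ BV n) ℂ :=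
  ((2 : ℂ) ^ n)⁻¹ •
    ∑ i : BV n, ∑ j : BV n,
      Matrix.fromBlocks (Matrix.single i j (1 : ℂ)) 0 0
          (Matrix.single (i + x) (j + x) (1 : ℂ)) * ρ *
        (Matrix.fromBlocks (Matrix.single i j (1 : ℂ)) 0 0
          (Matrix.single (i + x) (j + x) (1 : ℂ)))ᴴ

/-- The Pauli searching oracle `C_search = (2/3) C_x + (1/3) C_I`. -/
noncomputable def Csearch {n : ℕ} (x : BV n)
    (ρ : Matrix (BV n ⊕ BV n) (BV n ⊕ BV n) ℂ) :
    Matrix (BV n ⊕ BV n) (BV n ⊕ BV n) ℂ :=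
  (2 / 3 : ℂ) • Cx x ρ + (1 / 3 : ℂ) • CI ρ

/-- The operator `X ⊗ Q_α` in `(1+n)`-qubit block form `[[0, Q_α],[Q_α, 0]]`. -/
def XQ {n : ℕ} (α : BV n) : Matrix (BV n ⊕ BV n) (BV n ⊕ BV n) ℂ :=
  Matrix.fromBlocks 0 (Qx α) (Qx α) 0

/-!
Both channels average conjugations `ρ ↦ K ρ K†` by block-diagonal `K = diag(P, R)`, and such a
conjugation sends the off-diagonal `X ⊗ Q_α = [[0, Q_α], [Q_α, 0]]` to
`[[0, P Q_α R†], [R Q_α P†, 0]]`. For `C_I` we have `P = Q_β = -R`; the Pauli X-strings form a group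
isomorphic to `(ℤ/2)ⁿ` under `Q_α Q_β = Q_{α⊕β}`, so every term equals `-X ⊗ Q_α`. For `C_x` the
`(i, j)` term is `⟨j|Q_α|j⊕x⟩ [[0, |i⟩⟨i⊕x|], [|i⊕x⟩⟨i|, 0]]`, which vanishes unless `α = x`, and
summing over `i` rebuilds `X ⊗ Q_x`; the `2ⁿ` equal terms cancel the normalisation in both channels.
-/

namespace Matrix

variable {ι m n R : Type*}

theorem fromBlocks_sum [AddCommMonoid R] (s : Finset ι) (A : ι → Matrix m m R)
    (B : ι → Matrix m n R) (C : ι → Matrix n m R) (D : ι → Matrix n n R) :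
    ∑ i ∈ s, fromBlocks (A i) (B i) (C i) (D i) =
      fromBlocks (∑ i ∈ s, A i) (∑ i ∈ s, B i) (∑ i ∈ s, C i) (∑ i ∈ s, D i) := by
  classical
  induction s using Finset.induction_on with
  | empty => simp
  | insert a s ha ih => simp [Finset.sum_insert ha, ih, fromBlocks_add]

theorem fromBlocks_diagonal_mul_antidiagonal_mul_conjTranspose [Fintype m] [Fintype n]
    [Ring R] [StarRing R]
    (P : Matrix m m R) (Q : Matrix n n R) (B : Matrix m n R) (C : Matrix n m R) :
    fromBlocks P 0 0 Q * fromBlocks 0 B C 0 * (fromBlocks P 0 0 Q)ᴴ =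
      fromBlocks 0 (P * B * Qᴴ) (Q * C * Pᴴ) 0 := by
  simp [fromBlocks_multiply, fromBlocks_conjTranspose]

end Matrix

section Pauli

variable {n : ℕ}

theorem BV.add_self (a : BV n) : a + a = 0 :=
  funext fun i => CharTwo.add_self_eq_zero (a i)

theorem BV.add_add_cancel (a b : BV n) : a + b + b = a := by
  rw [add_assoc, BV.add_self, add_zero]

theorem BV.eq_add_iff_add_eq {a b c : BV n} : a = b + c ↔ b + a = c := by
  constructor <;> rintro rfl <;> rw [← add_assoc, BV.add_self, zero_add]

theorem inv_two_pow_smul_sum_const {M : Type*} [AddCommGroup M] [Module ℂ M] (A : M) :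
    ((2 : ℂ) ^ n)⁻¹ • ∑ _ : BV n, A = A := by
  rw [Finset.sum_const, Finset.card_univ, ← Nat.cast_smul_eq_nsmul ℂ, smul_smul]
  simp

theorem Qx_apply (α i j : BV n) : Qx α i j = if i + j = α then 1 else 0 := by
  simp only [Qx, of_apply, BV.eq_add_iff_add_eq]

theorem Qx_conjTranspose (α : BV n) : (Qx α)ᴴ = Qx α := by
  ext i j
  simp [Qx_apply, apply_ite, add_comm i]

theorem Qx_mul_Qx (α β : BV n) : Qx α * Qx β = Qx (α + β) := by
  ext i k
  simp only [Qx, mul_apply, of_apply, ite_mul, one_mul, zero_mul]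
  rw [Finset.sum_ite_eq' Finset.univ (i + α)]
  simp [add_assoc]

theorem Qx_mul_Qx_mul_conjTranspose (α β : BV n) : Qx β * Qx α * (Qx β)ᴴ = Qx α := by
  rw [Qx_conjTranspose, Qx_mul_Qx, Qx_mul_Qx, add_right_comm, BV.add_self, zero_add]

theorem sum_single_add_right (x : BV n) : ∑ i : BV n, single i (i + x) (1 : ℂ) = Qx x := by
  ext p q
  simp only [Matrix.sum_apply, single_apply, ite_and, Finset.sum_ite_eq, Finset.mem_univ,
    if_true, Qx, of_apply, eq_comm]

theorem sum_single_add_left (x : BV n) : ∑ i : BV n, single (i + x) i (1 : ℂ) = Qx x := by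
  rw [← sum_single_add_right x, ← Equiv.sum_comp (Equiv.addRight x)]
  simp [BV.add_add_cancel]

theorem CI_XQ (α : BV n) : CI (XQ α) = -XQ α := by
  have hterm (β : BV n) : fromBlocks (Qx β) 0 0 (-Qx β) * XQ α *
      (fromBlocks (Qx β) 0 0 (-Qx β))ᴴ = -XQ α := by
    rw [XQ, fromBlocks_diagonal_mul_antidiagonal_mul_conjTranspose]
    simp [Qx_mul_Qx_mul_conjTranspose, fromBlocks_neg]
  simp only [CI, hterm, inv_two_pow_smul_sum_const]

theorem Cx_XQ (x α : BV n) : Cx x (XQ α) = if α = x then XQ x else 0 := by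
  have hterm (i j : BV n) :
      fromBlocks (single i j (1 : ℂ)) 0 0 (single (i + x) (j + x) 1) * XQ α *
        (fromBlocks (single i j (1 : ℂ)) 0 0 (single (i + x) (j + x) 1))ᴴ =
      if α = x then fromBlocks 0 (single i (i + x) 1) (single (i + x) i 1) 0 else 0 := by
    have hright : j + (j + x) = x := by rw [← add_assoc, BV.add_self, zero_add]
    have hleft : j + x + j = x := by rw [add_comm, hright]
    rw [XQ, fromBlocks_diagonal_mul_antidiagonal_mul_conjTranspose]
    simp only [conjTranspose_single, single_mul_mul_single, Qx_apply, hright, hleft,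
      eq_comm (a := x)]
    split_ifs <;> simp
  simp only [Cx, hterm]
  rw [Finset.sum_comm, inv_two_pow_smul_sum_const]
  split_ifs
  · rw [fromBlocks_sum, sum_single_add_right, sum_single_add_left, Finset.sum_const_zero, XQ]
  · simp

end Pauli

/-- Action of the Pauli searching oracle: `C_search[X⊗Q_x] = (1/3) X⊗Q_x` and
`C_search[X⊗Q_α] = −(1/3) X⊗Q_α` for `α ≠ x`; moreover `C_I[X⊗Q_α] = −X⊗Q_α`
for all `α`, while `C_x[X⊗Q_x] = X⊗Q_x` and `C_x[X⊗Q_α] = 0` for `α ≠ x`. -/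
theorem pauli_searching_oracle_action {n : ℕ} (x : BV n) :
    Csearch x (XQ x) = (1 / 3 : ℂ) • XQ x ∧
    (∀ α : BV n, α ≠ x → Csearch x (XQ α) = (-(1 / 3) : ℂ) • XQ α) ∧
    (∀ α : BV n, CI (XQ α) = -XQ α) ∧
    Cx x (XQ x) = XQ x ∧
    (∀ α : BV n, α ≠ x → Cx x (XQ α) = 0) := by
  refine ⟨?_, fun α hα => ?_, CI_XQ, by simp [Cx_XQ], fun α hα => by simp [Cx_XQ, hα]⟩
  · rw [Csearch, Cx_XQ, if_pos rfl, CI_XQ]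
    module
  · rw [Csearch, Cx_XQ, if_neg hα, CI_XQ]
    module
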